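/- Let e₁, e₂ ∈ ℝ² be linearly independent, e₃ = −e₁ − e₂, and let 𝓜 be a real symmetric positive definite 2 × 2 matrix with eₖᵀ 𝓜 eₖ = 3 for k = 1, 2, 3. Then the Euclidean area of the triangle spanned by these edges satisfies |K| = (1/2)|det(e₁, e₂)| = (3√3/4) · (det 𝓜)^{-1/2}. Equivalently, with eigenvalues 1/h₁², 1/h₂² of 𝓜, one has |K| = (3√3/4) h₁ h₂. -/

import Mathlib

/-!
Put the edges as rows of a matrix `E`. The Gram matrix `E 𝓜 Eᵀ` of a unit triangle is
determined by the edge lengths alone: polarizing `e₃ = -(e₁ + e₂)` gives `e₁ᵀ 𝓜 e₂ = -C/2`, so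
`E 𝓜 Eᵀ = !![C, -C/2; -C/2, C]`. Taking determinants, `det(E)² det 𝓜 = 3C²/4`, and the area
`|det E| / 2` follows by taking square roots.
-/

open Matrix

namespace Matrix

variable {m n R : Type*} [Fintype n] [CommRing R]

theorem mul_mul_transpose_apply (A : Matrix m n R) (M : Matrix n n R) (i j : m) :
    (A * M * Aᵀ) i j = A i ⬝ᵥ (M *ᵥ A j) := by
  rw [mul_apply', mul_apply_eq_vecMul, dotProduct_mulVec]
  rfl

theorem det_mul_mul_transpose [DecidableEq n] (A M : Matrix n n R) :
    (A * M * Aᵀ).det = A.det ^ 2 * M.det := by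
  rw [det_mul, det_mul, det_transpose]
  ring

theorem IsSymm.dotProduct_mulVec_comm {M : Matrix n n R} (hM : M.IsSymm) (x y : n → R) :
    y ⬝ᵥ (M *ᵥ x) = x ⬝ᵥ (M *ᵥ y) := by
  rw [dotProduct_mulVec, ← mulVec_transpose, hM.eq, dotProduct_comm]

theorem IsSymm.dotProduct_mulVec_add_add {M : Matrix n n R} (hM : M.IsSymm) (x y : n → R) :
    (x + y) ⬝ᵥ (M *ᵥ (x + y)) = x ⬝ᵥ (M *ᵥ x) + 2 * (x ⬝ᵥ (M *ᵥ y)) + y ⬝ᵥ (M *ᵥ y) := by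
  rw [mulVec_add, dotProduct_add, add_dotProduct, add_dotProduct, hM.dotProduct_mulVec_comm x y]
  ring

end Matrix

section UnitTriangle

variable {e₁ e₂ e₃ : Fin 2 → ℝ} {𝓜 : Matrix (Fin 2) (Fin 2) ℝ} {C : ℝ}

theorem dotProduct_mulVec_eq_neg_half_of_unit_triangle (he₃ : e₃ = -e₁ - e₂) (hsymm : 𝓜.IsSymm)
    (h₁ : e₁ ⬝ᵥ (𝓜 *ᵥ e₁) = C) (h₂ : e₂ ⬝ᵥ (𝓜 *ᵥ e₂) = C) (h₃ : e₃ ⬝ᵥ (𝓜 *ᵥ e₃) = C) :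
    e₁ ⬝ᵥ (𝓜 *ᵥ e₂) = -C / 2 := by
  have hsum : e₃ ⬝ᵥ (𝓜 *ᵥ e₃) = (e₁ + e₂) ⬝ᵥ (𝓜 *ᵥ (e₁ + e₂)) := by
    rw [he₃, ← neg_add', mulVec_neg, neg_dotProduct, dotProduct_neg, neg_neg]
  rw [hsum, hsymm.dotProduct_mulVec_add_add, h₁, h₂] at h₃
  linarith

theorem gram_eq_of_unit_triangle (he₃ : e₃ = -e₁ - e₂) (hsymm : 𝓜.IsSymm)
    (h₁ : e₁ ⬝ᵥ (𝓜 *ᵥ e₁) = C) (h₂ : e₂ ⬝ᵥ (𝓜 *ᵥ e₂) = C) (h₃ : e₃ ⬝ᵥ (𝓜 *ᵥ e₃) = C) :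
    of ![e₁, e₂] * 𝓜 * (of ![e₁, e₂])ᵀ = !![C, -C / 2; -C / 2, C] := by
  have h₁₂ := dotProduct_mulVec_eq_neg_half_of_unit_triangle he₃ hsymm h₁ h₂ h₃
  have h₂₁ : e₂ ⬝ᵥ (𝓜 *ᵥ e₁) = -C / 2 := by rw [hsymm.dotProduct_mulVec_comm, h₁₂]
  ext i j
  rw [mul_mul_transpose_apply]
  fin_cases i <;> fin_cases j
  exacts [h₁, h₁₂, h₂₁, h₂]

theorem edge_det_sq_mul_det_of_unit_triangle (he₃ : e₃ = -e₁ - e₂) (hsymm : 𝓜.IsSymm)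
    (h₁ : e₁ ⬝ᵥ (𝓜 *ᵥ e₁) = C) (h₂ : e₂ ⬝ᵥ (𝓜 *ᵥ e₂) = C) (h₃ : e₃ ⬝ᵥ (𝓜 *ᵥ e₃) = C) :
    (e₁ 0 * e₂ 1 - e₁ 1 * e₂ 0) ^ 2 * 𝓜.det = 3 * C ^ 2 / 4 := by
  have hE : (of ![e₁, e₂]).det = e₁ 0 * e₂ 1 - e₁ 1 * e₂ 0 := by simp [det_fin_two]
  rw [← hE, ← det_mul_mul_transpose, gram_eq_of_unit_triangle he₃ hsymm h₁ h₂ h₃, det_fin_two_of]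
  ring

end UnitTriangle

theorem half_abs_eq_of_sq_mul_eq {d m k : ℝ} (hk : 0 < k) (h : d ^ 2 * m = k) :
    1 / 2 * |d| = Real.sqrt k / 2 * m ^ (-(1 : ℝ) / 2) := by
  have hm : 0 < m := pos_of_mul_pos_right (h ▸ hk) (sq_nonneg d)
  have habs : |d| * Real.sqrt m = Real.sqrt k := by
    rw [← h, Real.sqrt_mul (sq_nonneg d), Real.sqrt_sq_eq_abs]
  rw [neg_div, Real.rpow_neg hm.le, ← Real.sqrt_eq_rpow, ← habs]
  field_simp

theorem one_div_sq_rpow_neg_half {x : ℝ} (hx : 0 ≤ x) : (1 / x ^ 2) ^ (-(1 : ℝ) / 2) = x := by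
  rw [one_div, Real.inv_rpow (sq_nonneg x), neg_div, Real.rpow_neg (sq_nonneg x), inv_inv,
    ← Real.sqrt_eq_rpow, Real.sqrt_sq hx]

theorem unit_triangle_area_metric_general
    (e₁ e₂ : Fin 2 → ℝ)
    (e₃ : Fin 2 → ℝ) (he₃ : e₃ = -e₁ - e₂)
    (𝓜 : Matrix (Fin 2) (Fin 2) ℝ) (hsymm : 𝓜.IsSymm)
    (h₁' : e₁ ⬝ᵥ (𝓜 *ᵥ e₁) = 3) (h₂' : e₂ ⬝ᵥ (𝓜 *ᵥ e₂) = 3)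
    (h₃' : e₃ ⬝ᵥ (𝓜 *ᵥ e₃) = 3) :
    (1 / 2) * |e₁ 0 * e₂ 1 - e₁ 1 * e₂ 0| =
        (3 * Real.sqrt 3 / 4) * (𝓜.det) ^ (-(1 : ℝ) / 2) ∧
      ∀ h₁ h₂ : ℝ, 0 < h₁ → 0 < h₂ → 𝓜.det = 1 / (h₁ ^ 2 * h₂ ^ 2) →
        (1 / 2) * |e₁ 0 * e₂ 1 - e₁ 1 * e₂ 0| = (3 * Real.sqrt 3 / 4) * (h₁ * h₂) := by
  have hkey := edge_det_sq_mul_det_of_unit_triangle he₃ hsymm h₁' h₂' h₃'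
  have hsqrt : Real.sqrt (3 * 3 ^ 2 / 4) / 2 = 3 * Real.sqrt 3 / 4 := by
    rw [show (3 * 3 ^ 2 / 4 : ℝ) = (3 / 2) ^ 2 * 3 by norm_num, Real.sqrt_mul (by positivity),
      Real.sqrt_sq (by norm_num)]
    ring
  have harea := hsqrt ▸ half_abs_eq_of_sq_mul_eq (by norm_num) hkey
  refine ⟨harea, fun h₁ h₂ hh₁ hh₂ hdet => ?_⟩
  rw [harea, hdet, ← mul_pow, one_div_sq_rpow_neg_half (mul_pos hh₁ hh₂).le]

/-- A triangle that is unit (with constant `C = 3`) with respect to a symmetric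
positive definite metric tensor `𝓜` has Euclidean area
`|K| = (1/2)|det(e₁,e₂)| = (3√3/4) (det 𝓜)^(−1/2)`; equivalently, with eigenvalues
`1/h₁², 1/h₂²` of `𝓜` (so `det 𝓜 = 1/(h₁² h₂²)`), `|K| = (3√3/4) h₁ h₂`. -/
theorem unit_triangle_area_metric
    (e₁ e₂ : Fin 2 → ℝ) (hind : LinearIndependent ℝ ![e₁, e₂])
    (e₃ : Fin 2 → ℝ) (he₃ : e₃ = -e₁ - e₂)
    (𝓜 : Matrix (Fin 2) (Fin 2) ℝ) (hsymm : 𝓜.IsSymm) (hpd : 𝓜.PosDef)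
    (h₁' : e₁ ⬝ᵥ (𝓜 *ᵥ e₁) = 3) (h₂' : e₂ ⬝ᵥ (𝓜 *ᵥ e₂) = 3)
    (h₃' : e₃ ⬝ᵥ (𝓜 *ᵥ e₃) = 3) :
    (1 / 2) * |e₁ 0 * e₂ 1 - e₁ 1 * e₂ 0| =
        (3 * Real.sqrt 3 / 4) * (𝓜.det) ^ (-(1 : ℝ) / 2) ∧
      ∀ h₁ h₂ : ℝ, 0 < h₁ → 0 < h₂ → 𝓜.det = 1 / (h₁ ^ 2 * h₂ ^ 2) →
        (1 / 2) * |e₁ 0 * e₂ 1 - e₁ 1 * e₂ 0| = (3 * Real.sqrt 3 / 4) * (h₁ * h₂) :=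
  unit_triangle_area_metric_general e₁ e₂ e₃ he₃ 𝓜 hsymm h₁' h₂' h₃'
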